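/- Let σ ∈ [3/2, 2]. There exists a constant C > 0, depending only on σ, such that for every integer m ≥ 10: Σ_{j=4}^{⌊m/2⌋} (m! / (j!(m−j)!)) · [(j−4)!]^σ · [(m−j−5)!]^σ ≤ C · [(m−6)!]^σ. -/

import Mathlib

/-!
Write `j = a + 4` and `m = a + b + 9`, so that `j ≤ m / 2` means `a ≤ b + 1`. Since
`a! b! (m - 8)² ≤ (m - 6)!` and `2 (σ - 1) ≥ 1`, splitting `(a! b!)^σ = a! b! · (a! b!)^(σ - 1)`
bounds the `j`-th term by `(m - 6)!^σ` times
`m! a! b! / ((a + 4)! (b + 5)! (m - 6)! (m - 8)) ≤ m⁶ / ((a + 1)(a + 2)(b + 1)⁵ (m - 8))`.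
As `m ≤ 10 (b + 1)` and `b + 1 ≤ m - 8`, this is at most `10⁶ / ((j - 3)(j - 2))`, and these
coefficients telescope to a sum at most `10⁶`.
-/

open Finset Nat

theorem sum_Icc_inv_sub_three_mul_sub_two_le_one (n : ℕ) :
    ∑ j ∈ Icc 4 n, (((j : ℝ) - 3) * ((j : ℝ) - 2))⁻¹ ≤ 1 := by
  have telescope (k : ℕ) : ((((4 + k : ℕ) : ℝ) - 3) * (((4 + k : ℕ) : ℝ) - 2))⁻¹ =
      ((k : ℝ) + 1)⁻¹ - (((k + 1 : ℕ) : ℝ) + 1)⁻¹ := by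
    have hk : ((4 + k : ℕ) : ℝ) - 3 = k + 1 := by push_cast; ring
    rw [hk, show ((4 + k : ℕ) : ℝ) - 2 = (k + 1 : ℕ) + 1 by push_cast; ring]
    field_simp
    push_cast
    ring
  rw [← Ico_add_one_right_eq_Icc, sum_Ico_eq_sum_range]
  simp only [telescope, sum_range_sub' (fun k : ℕ => ((k : ℝ) + 1)⁻¹)]
  simp only [CharP.cast_eq_zero, zero_add, inv_one, sub_le_self_iff, inv_nonneg]
  positivity

theorem factorial_add_le_factorial_mul_pow (n k : ℕ) : (n + k)! ≤ n ! * (n + k) ^ k := by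
  rw [← factorial_mul_ascFactorial]
  exact Nat.mul_le_mul_left _ (ascFactorial_le_pow_add n k)

theorem factorial_mul_factorial_mul_sq_le (a b : ℕ) :
    a ! * b ! * (a + b + 1) ^ 2 ≤ (a + b + 3)! :=
  calc a ! * b ! * (a + b + 1) ^ 2 ≤ (a + b)! * (a + b + 1) ^ 2 := by
        gcongr
        exact Nat.le_of_dvd (factorial_pos _) (factorial_mul_factorial_dvd_factorial_add a b)
    _ ≤ (a + b + 2)! := factorial_mul_pow_le_factorial
    _ ≤ (a + b + 3)! := factorial_le (by omega)

theorem factorial_mul_factorial_mul_le (a b : ℕ) (hab : a ≤ b + 1) :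
    (a + b + 9)! * (a ! * b !) * ((a + 1) * (a + 2)) ≤
      10 ^ 6 * (a + b + 1) * (a + b + 3)! * ((a + 4)! * (b + 5)!) := by
  have hm : (a + b + 9)! ≤ (a + b + 3)! * (a + b + 9) ^ 6 :=
    factorial_add_le_factorial_mul_pow (a + b + 3) 6
  have ha : a ! * ((a + 1) * (a + 2)) ≤ (a + 4)! := by
    calc a ! * ((a + 1) * (a + 2)) = (a + 2)! := by simp only [factorial_succ]; ring
      _ ≤ (a + 4)! := factorial_le (by omega)
  have hb : b ! * (b + 1) ^ 5 ≤ (b + 5)! := factorial_mul_pow_le_factorial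
  have hpow : (a + b + 9) ^ 6 ≤ 10 ^ 6 * (a + b + 1) * (b + 1) ^ 5 :=
    calc (a + b + 9) ^ 6 ≤ (10 * (b + 1)) ^ 6 := Nat.pow_le_pow_left (by omega) 6
      _ = 10 ^ 6 * (b + 1) * (b + 1) ^ 5 := by ring
      _ ≤ 10 ^ 6 * (a + b + 1) * (b + 1) ^ 5 := by gcongr; omega
  calc (a + b + 9)! * (a ! * b !) * ((a + 1) * (a + 2))
      = (a + b + 9)! * b ! * (a ! * ((a + 1) * (a + 2))) := by ring
    _ ≤ (a + b + 3)! * (10 ^ 6 * (a + b + 1) * (b + 1) ^ 5) * b ! * (a + 4)! := by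
        gcongr; exact hm.trans (Nat.mul_le_mul_left _ hpow)
    _ = 10 ^ 6 * (a + b + 1) * (a + b + 3)! * ((a + 4)! * (b ! * (b + 1) ^ 5)) := by ring
    _ ≤ 10 ^ 6 * (a + b + 1) * (a + b + 3)! * ((a + 4)! * (b + 5)!) := by gcongr

theorem mul_rpow_le_mul_rpow_sub_one {p q F σ : ℝ} (hp : 0 < p) (hq : 1 ≤ q)
    (hpF : p * q ^ 2 ≤ F) (hσ : 3 / 2 ≤ σ) : q * p ^ σ ≤ p * F ^ (σ - 1) := by
  have hq2 : q ≤ (q ^ 2) ^ (σ - 1) := by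
    rw [← Real.rpow_natCast_mul (by positivity)]
    exact Real.self_le_rpow_of_one_le hq (by push_cast; linarith)
  calc q * p ^ σ = p * (q * p ^ (σ - 1)) := by
        rw [Real.rpow_sub_one hp.ne']; field_simp
    _ ≤ p * ((q ^ 2) ^ (σ - 1) * p ^ (σ - 1)) := by gcongr
    _ = p * (p * q ^ 2) ^ (σ - 1) := by
        rw [Real.mul_rpow (by positivity) (by positivity), mul_comm ((q ^ 2) ^ _)]
    _ ≤ p * F ^ (σ - 1) := by gcongr; linarith

theorem factorial_div_mul_factorial_rpow_le {σ : ℝ} (hσ : 3 / 2 ≤ σ) {a b : ℕ} (hab : a ≤ b + 1) :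
    ((a + b + 9)! : ℝ) / (((a + 4)! : ℝ) * ((b + 5)! : ℝ)) * (a ! : ℝ) ^ σ * (b ! : ℝ) ^ σ ≤
      10 ^ 6 * ((a + b + 3)! : ℝ) ^ σ * (((a : ℝ) + 1) * ((a : ℝ) + 2))⁻¹ := by
  have hpF : ((a ! : ℝ) * (b ! : ℝ)) * ((a : ℝ) + b + 1) ^ 2 ≤ ((a + b + 3)! : ℝ) := by
    exact_mod_cast factorial_mul_factorial_mul_sq_le a b
  have hrpow := mul_rpow_le_mul_rpow_sub_one (by positivity)
    (le_add_of_nonneg_left (by positivity)) hpF hσ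
  have hcount : ((a + b + 9)! : ℝ) * ((a ! : ℝ) * (b ! : ℝ)) * (((a : ℝ) + 1) * ((a : ℝ) + 2)) ≤
      10 ^ 6 * ((a : ℝ) + b + 1) * ((a + b + 3)! : ℝ) * (((a + 4)! : ℝ) * ((b + 5)! : ℝ)) := by
    exact_mod_cast factorial_mul_factorial_mul_le a b hab
  rw [mul_assoc, ← Real.mul_rpow (by positivity) (by positivity)]
  set p : ℝ := (a ! : ℝ) * (b ! : ℝ)
  set q : ℝ := (a : ℝ) + b + 1
  set F : ℝ := ((a + b + 3)! : ℝ)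
  set P : ℝ := ((a : ℝ) + 1) * ((a : ℝ) + 2)
  set D : ℝ := ((a + 4)! : ℝ) * ((b + 5)! : ℝ)
  set M : ℝ := ((a + b + 9)! : ℝ)
  have hF : F ^ σ = F * F ^ (σ - 1) := by
    have hF0 : F ≠ 0 := by positivity
    rw [Real.rpow_sub_one hF0]; field_simp
  rw [div_mul_eq_mul_div, div_le_iff₀ (by positivity), ← div_eq_mul_inv, div_mul_eq_mul_div,
    le_div_iff₀ (by positivity)]
  refine le_of_mul_le_mul_left ?_ (by positivity : 0 < q)
  calc q * (M * p ^ σ * P) = M * P * (q * p ^ σ) := by ring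
    _ ≤ M * P * (p * F ^ (σ - 1)) := by gcongr
    _ = M * p * P * F ^ (σ - 1) := by ring
    _ ≤ 10 ^ 6 * q * F * D * F ^ (σ - 1) := by gcongr
    _ = q * (10 ^ 6 * F ^ σ * D) := by rw [hF]; ring

theorem factorial_convolution_inequality_general (σ : ℝ) (hσl : 3 / 2 ≤ σ) :
    ∃ C : ℝ, 0 < C ∧
      ∀ m : ℕ, 10 ≤ m →
        (∑ j ∈ Finset.Icc 4 (m / 2),
            ((m.factorial : ℝ) / ((j.factorial : ℝ) * ((m - j).factorial : ℝ)))
              * ((j - 4).factorial : ℝ) ^ σ * ((m - j - 5).factorial : ℝ) ^ σ)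
          ≤ C * ((m - 6).factorial : ℝ) ^ σ := by
  refine ⟨10 ^ 6, by norm_num, fun m hm => ?_⟩
  have hterm : ∀ j ∈ Icc 4 (m / 2),
      (m ! : ℝ) / ((j ! : ℝ) * ((m - j)! : ℝ)) * ((j - 4)! : ℝ) ^ σ * ((m - j - 5)! : ℝ) ^ σ ≤
        10 ^ 6 * ((m - 6)! : ℝ) ^ σ * (((j : ℝ) - 3) * ((j : ℝ) - 2))⁻¹ := by
    intro j hj
    rw [mem_Icc] at hj
    obtain ⟨a, b, rfl, rfl⟩ : ∃ a b, j = a + 4 ∧ m = a + b + 9 :=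
      ⟨j - 4, m - j - 5, by omega, by omega⟩
    rw [show a + b + 9 - (a + 4) = b + 5 by omega, show b + 5 - 5 = b by omega,
      show a + b + 9 - 6 = a + b + 3 by omega, Nat.add_sub_cancel]
    push_cast
    convert factorial_div_mul_factorial_rpow_le hσl (a := a) (b := b) (by omega) using 3
    ring
  calc _ ≤ ∑ j ∈ Icc 4 (m / 2), 10 ^ 6 * ((m - 6)! : ℝ) ^ σ * (((j : ℝ) - 3) * ((j : ℝ) - 2))⁻¹ :=
        sum_le_sum hterm
    _ = 10 ^ 6 * ((m - 6)! : ℝ) ^ σ * ∑ j ∈ Icc 4 (m / 2), (((j : ℝ) - 3) * ((j : ℝ) - 2))⁻¹ :=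
        (mul_sum ..).symm
    _ ≤ 10 ^ 6 * ((m - 6)! : ℝ) ^ σ :=
        mul_le_of_le_one_right (by positivity) (sum_Icc_inv_sub_three_mul_sub_two_le_one _)

/-- factorial convolution inequality from the proof of Lemma 3.3:
for σ ∈ [3/2,2] there is C > 0 depending only on σ such that for every m ≥ 10,
Σ_{j=4}^{⌊m/2⌋} (m!/(j!(m−j)!)) [(j−4)!]^σ [(m−j−5)!]^σ ≤ C [(m−6)!]^σ. -/
theorem factorial_convolution_inequality (σ : ℝ) (hσl : 3 / 2 ≤ σ) (hσu : σ ≤ 2) :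
    ∃ C : ℝ, 0 < C ∧
      ∀ m : ℕ, 10 ≤ m →
        (∑ j ∈ Finset.Icc 4 (m / 2),
            ((m.factorial : ℝ) / ((j.factorial : ℝ) * ((m - j).factorial : ℝ)))
              * ((j - 4).factorial : ℝ) ^ σ * ((m - j - 5).factorial : ℝ) ^ σ)
          ≤ C * ((m - 6).factorial : ℝ) ^ σ :=
  factorial_convolution_inequality_general σ hσl
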